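/- Let k ≥ 1, d ≥ 1, and τ, α > 0. Let ρ : [n] → [k] be a coloring and let E' be a finite set of non-monochromatic edges partitioned into k nonempty parts E_1, …, E_k, with N := Σ_i |E_i|. For each i, let d_{i,v} be the degree of v in the graph with edge set E_i, let γ_i (resp. κ_i) be the fraction of ordered pairs of distinct edges e, e' ∈ E_i with ρ(e) ∩ ρ(e') = ∅ (resp. |ρ(e) ∩ ρ(e')| = 2). Suppose: (a) the k-means cost of the partition (C_1, …, C_k), where C_i := {p_e : e ∈ E_i}, is at most 3N − (1−τ)·kd; (b) (Σ_v d_{i,v}²)/|E_i| ≤ d(1+5√α) for every i; (c) κ_i·(|E_i|−1) ≤ 36·log k for every i; and (d) 5√α·kd + k + 36·k·log k ≤ 6τ·kd. Then Σ over those i with γ_i > τ/3 of |E_i| is at most 22·kd. -/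

import Mathlib

open Finset

/-- The 1-means (single-center) cost of a finite cluster `C ⊆ ℝ^D`:
`min_{c ∈ ℝ^D} ∑_{p ∈ C} ‖p - c‖²` (expressed as an infimum, which is attained). -/
noncomputable def oneMeansCost {D : ℕ} (C : Finset (EuclideanSpace ℝ (Fin D))) : ℝ :=
  ⨅ c : EuclideanSpace ℝ (Fin D), ∑ p ∈ C, ‖p - c‖ ^ 2

/-- The embedded point `p_e := e_u + e_v + e_{n+ρ(u)} + e_{n+ρ(v)} ∈ ℝ^{n+k}`. -/
noncomputable def embedEdge (n k : ℕ) (ρ : Fin n → Fin k) :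
    Sym2 (Fin n) → EuclideanSpace ℝ (Fin (n + k)) :=
  Sym2.lift ⟨fun u v =>
      EuclideanSpace.single (Fin.castAdd k u) (1 : ℝ) +
      EuclideanSpace.single (Fin.castAdd k v) (1 : ℝ) +
      EuclideanSpace.single (Fin.natAdd n (ρ u)) (1 : ℝ) +
      EuclideanSpace.single (Fin.natAdd n (ρ v)) (1 : ℝ),
    fun u v => by abel_nf⟩

/-- The color set `ρ(e) := {ρ(u), ρ(v)}` of an edge `e = {u,v}`. -/
def colorPair {n k : ℕ} (ρ : Fin n → Fin k) : Sym2 (Fin n) → Finset (Fin k) :=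
  Sym2.lift ⟨fun u v => {ρ u, ρ v}, fun u v => Finset.pair_comm (ρ u) (ρ v)⟩

/-- The fraction of ordered pairs of distinct edges of `E` with no color in common. -/
noncomputable def gammaFrac {n k : ℕ} (ρ : Fin n → Fin k) (E : Finset (Sym2 (Fin n))) : ℝ :=
  ((E.offDiag.filter (fun p => colorPair ρ p.1 ∩ colorPair ρ p.2 = ∅)).card : ℝ) /
    ((E.card : ℝ) * ((E.card : ℝ) - 1))

/-- The fraction of ordered pairs of distinct edges of `E` with two colors in common. -/
noncomputable def kappaFrac {n k : ℕ} (ρ : Fin n → Fin k) (E : Finset (Sym2 (Fin n))) : ℝ :=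
  ((E.offDiag.filter (fun p => (colorPair ρ p.1 ∩ colorPair ρ p.2).card = 2)).card : ℝ) /
    ((E.card : ℝ) * ((E.card : ℝ) - 1))

section Stmt9Helpers
open Classical

variable {n k : ℕ} {ρ : Fin n → Fin k}

lemma castAdd_ne_natAdd (x : Fin n) (c : Fin k) : Fin.castAdd k x ≠ Fin.natAdd n c := by
  intro h
  have := congrArg Fin.val h
  simp only [Fin.coe_castAdd, Fin.coe_natAdd] at this
  omega

lemma nondiag_ne {u v : Fin n} (h : ¬ (Sym2.map ρ s(u,v)).IsDiag) : ρ u ≠ ρ v := by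
  simpa [Sym2.isDiag_iff_proj_eq] using h

lemma embed_apply_castAdd {e : Sym2 (Fin n)} (he : ¬ (Sym2.map ρ e).IsDiag) (x : Fin n) :
    embedEdge n k ρ e (Fin.castAdd k x) = if x ∈ e then 1 else 0 := by
  induction e using Sym2.ind with
  | _ u v =>
    have hρ : ρ u ≠ ρ v := nondiag_ne he
    have huv : u ≠ v := fun h => hρ (by rw [h])
    simp only [embedEdge, Sym2.lift_mk, PiLp.add_apply, EuclideanSpace.single_apply,
      Fin.castAdd_inj, Sym2.mem_iff]
    rw [if_neg (castAdd_ne_natAdd x (ρ u)), if_neg (castAdd_ne_natAdd x (ρ v))]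
    by_cases h1 : x = u <;> by_cases h2 : x = v <;> simp_all

lemma embed_apply_natAdd {e : Sym2 (Fin n)} (he : ¬ (Sym2.map ρ e).IsDiag) (c : Fin k) :
    embedEdge n k ρ e (Fin.natAdd n c) = if c ∈ colorPair ρ e then 1 else 0 := by
  induction e using Sym2.ind with
  | _ u v =>
    have hρ : ρ u ≠ ρ v := nondiag_ne he
    simp only [embedEdge, colorPair, Sym2.lift_mk, PiLp.add_apply, EuclideanSpace.single_apply,
      Finset.mem_insert, Finset.mem_singleton]
    rw [if_neg (castAdd_ne_natAdd u c).symm, if_neg (castAdd_ne_natAdd v c).symm]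
    have : ∀ a b : Fin k, Fin.natAdd n a = Fin.natAdd n b ↔ a = b := by
      intro a b; simp [Fin.ext_iff]
    simp only [this]
    by_cases h1 : c = ρ u <;> by_cases h2 : c = ρ v <;> simp_all

open RealInnerProductSpace in
lemma inner_embed {e e' : Sym2 (Fin n)} (he : ¬ (Sym2.map ρ e).IsDiag)
    (he' : ¬ (Sym2.map ρ e').IsDiag) :
    ⟪embedEdge n k ρ e, embedEdge n k ρ e'⟫ =
      (∑ x : Fin n, (if x ∈ e then (1:ℝ) else 0) * (if x ∈ e' then 1 else 0)) +
      (∑ c : Fin k, (if c ∈ colorPair ρ e then (1:ℝ) else 0) *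
        (if c ∈ colorPair ρ e' then 1 else 0)) := by
  rw [PiLp.inner_apply]
  simp only [RCLike.inner_apply, conj_trivial]
  rw [Fin.sum_univ_add (fun j => embedEdge n k ρ e' j * embedEdge n k ρ e j)]
  congr 1
  · exact Finset.sum_congr rfl fun x _ => by
      rw [embed_apply_castAdd he, embed_apply_castAdd he', mul_comm]
  · exact Finset.sum_congr rfl fun c _ => by
      rw [embed_apply_natAdd he, embed_apply_natAdd he', mul_comm]

lemma sum_mem_edge {e : Sym2 (Fin n)} (he : ¬ (Sym2.map ρ e).IsDiag) :
    ∑ x : Fin n, (if x ∈ e then (1:ℝ) else 0) = 2 := by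
  induction e using Sym2.ind with
  | _ u v =>
    have hρ : ρ u ≠ ρ v := nondiag_ne he
    have huv : u ≠ v := fun h => hρ (by rw [h])
    rw [show (∑ x : Fin n, (if x ∈ s(u,v) then (1:ℝ) else 0))
        = ∑ x : Fin n, (if x ∈ ({u, v} : Finset (Fin n)) then (1:ℝ) else 0) from
      Finset.sum_congr rfl fun x _ => by simp [Sym2.mem_iff]]
    rw [Finset.sum_boole, show Finset.univ.filter (fun x => x ∈ ({u, v} : Finset (Fin n)))
        = {u, v} from by ext x; simp, Finset.card_pair huv]
    norm_num

lemma sum_mem_colorPair {e : Sym2 (Fin n)} (he : ¬ (Sym2.map ρ e).IsDiag) :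
    ∑ c : Fin k, (if c ∈ colorPair ρ e then (1:ℝ) else 0) = 2 := by
  induction e using Sym2.ind with
  | _ u v =>
    have hρ : ρ u ≠ ρ v := nondiag_ne he
    rw [Finset.sum_boole]
    have hf : Finset.univ.filter (fun c => c ∈ colorPair ρ s(u,v)) = {ρ u, ρ v} := by
      ext c; simp [colorPair]
    rw [hf, Finset.card_pair hρ]
    norm_num

open RealInnerProductSpace in
lemma norm_embed_sq {e : Sym2 (Fin n)} (he : ¬ (Sym2.map ρ e).IsDiag) :
    ‖embedEdge n k ρ e‖^2 = 4 := by
  rw [← real_inner_self_eq_norm_sq, inner_embed he he]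
  have h1 : ∀ (P : Prop) [Decidable P], (if P then (1:ℝ) else 0) * (if P then (1:ℝ) else 0)
      = if P then 1 else 0 := by intro P _; by_cases h : P <;> simp [h]
  simp only [h1]
  rw [sum_mem_edge he, sum_mem_colorPair he]
  norm_num

lemma embed_injOn {E' : Finset (Sym2 (Fin n))} (hnd : ∀ e ∈ E', ¬ (Sym2.map ρ e).IsDiag) :
    Set.InjOn (embedEdge n k ρ) E' := by
  intro e he e' he' h
  apply Sym2.ext
  intro x
  have : embedEdge n k ρ e (Fin.castAdd k x) = embedEdge n k ρ e' (Fin.castAdd k x) := by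
    rw [h]
  rw [embed_apply_castAdd (hnd e he), embed_apply_castAdd (hnd e' he')] at this
  by_cases h1 : x ∈ e <;> by_cases h2 : x ∈ e' <;> simp_all

lemma sq_sum_swap {β γ : Type*} [Fintype γ] (E' : Finset β) (f : β → γ → ℝ) :
    ∑ e ∈ E', ∑ e' ∈ E', ∑ x : γ, f e x * f e' x = ∑ x : γ, (∑ e ∈ E', f e x)^2 := by
  calc ∑ e ∈ E', ∑ e' ∈ E', ∑ x : γ, f e x * f e' x
      = ∑ e ∈ E', ∑ x : γ, ∑ e' ∈ E', f e x * f e' x :=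
        Finset.sum_congr rfl fun e _ => Finset.sum_comm
    _ = ∑ x : γ, ∑ e ∈ E', ∑ e' ∈ E', f e x * f e' x := Finset.sum_comm
    _ = ∑ x : γ, (∑ e ∈ E', f e x)^2 := by simp_rw [sq, Finset.sum_mul_sum]

open RealInnerProductSpace in
lemma norm_sum_sq {E' : Finset (Sym2 (Fin n))} (hnd : ∀ e ∈ E', ¬ (Sym2.map ρ e).IsDiag) :
    ‖∑ e ∈ E', embedEdge n k ρ e‖^2 =
      (∑ x : Fin n, (∑ e ∈ E', if x ∈ e then (1:ℝ) else 0)^2) +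
      (∑ c : Fin k, (∑ e ∈ E', if c ∈ colorPair ρ e then (1:ℝ) else 0)^2) := by
  rw [← real_inner_self_eq_norm_sq, sum_inner]
  have : ∀ e ∈ E', ⟪embedEdge n k ρ e, ∑ e' ∈ E', embedEdge n k ρ e'⟫ =
      ∑ e' ∈ E', ((∑ x : Fin n, (if x ∈ e then (1:ℝ) else 0) * (if x ∈ e' then 1 else 0)) +
      (∑ c : Fin k, (if c ∈ colorPair ρ e then (1:ℝ) else 0) *
        (if c ∈ colorPair ρ e' then 1 else 0))) := by
    intro e he
    rw [inner_sum]
    exact Finset.sum_congr rfl fun e' he' => inner_embed (hnd e he) (hnd e' he')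
  rw [Finset.sum_congr rfl this]
  simp only [Finset.sum_add_distrib]
  congr 1
  · exact sq_sum_swap E' _
  · exact sq_sum_swap E' _

open RealInnerProductSpace in
lemma cost_ge {E' : Finset (Sym2 (Fin n))} (hE : E'.Nonempty)
    (hnd : ∀ e ∈ E', ¬ (Sym2.map ρ e).IsDiag) :
    4 * (E'.card:ℝ) - ((∑ x : Fin n, (∑ e ∈ E', if x ∈ e then (1:ℝ) else 0)^2) +
      (∑ c : Fin k, (∑ e ∈ E', if c ∈ colorPair ρ e then (1:ℝ) else 0)^2)) / E'.card ≤
    oneMeansCost (E'.image (embedEdge n k ρ)) := by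
  have hN : (0:ℝ) < E'.card := by exact_mod_cast hE.card_pos
  rw [← norm_sum_sq hnd]
  apply le_ciInf
  intro c
  rw [Finset.sum_image (fun e he e' he' => embed_injOn hnd he he')]
  have expand : ∀ e ∈ E', ‖embedEdge n k ρ e - c‖^2
      = 4 - 2*⟪embedEdge n k ρ e, c⟫ + ‖c‖^2 := fun e he => by
    rw [norm_sub_sq_real, norm_embed_sq (hnd e he)]
  rw [Finset.sum_congr rfl expand]
  rw [Finset.sum_add_distrib, Finset.sum_sub_distrib, Finset.sum_const, Finset.sum_const,
    ← Finset.mul_sum, ← sum_inner]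
  set s := ∑ e ∈ E', embedEdge n k ρ e with hs
  simp only [nsmul_eq_mul]
  have key : 2*⟪s,c⟫ ≤ ‖s‖^2/(E'.card:ℝ) + (E'.card:ℝ)*‖c‖^2 := by
    rw [div_add' _ _ _ (ne_of_gt hN), le_div_iff₀ hN]
    nlinarith [real_inner_le_norm s c, sq_nonneg (‖s‖ - (E'.card:ℝ)*‖c‖), hN,
      norm_nonneg c, norm_nonneg s]
  linarith

lemma colorPair_card {e : Sym2 (Fin n)} (he : ¬ (Sym2.map ρ e).IsDiag) :
    (colorPair ρ e).card = 2 := by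
  induction e using Sym2.ind with
  | _ u v =>
    have hρ : ρ u ≠ ρ v := nondiag_ne he
    simp [colorPair, Finset.card_pair hρ]

lemma diag_sum {β : Type*} [DecidableEq β] (s : Finset β) (f : β × β → ℝ) :
    ∑ p ∈ s.diag, f p = ∑ a ∈ s, f (a, a) := by
  rw [show s.diag = s.image (fun a => (a,a)) from by
    ext ⟨a,b⟩
    simp only [Finset.mem_diag, Finset.mem_image, Prod.mk.injEq]
    constructor
    · rintro ⟨h1, rfl⟩; exact ⟨a, h1, rfl, rfl⟩
    · rintro ⟨x, hx, rfl, rfl⟩; exact ⟨hx, rfl⟩]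
  rw [Finset.sum_image (by simp)]

lemma colorsq_le {E' : Finset (Sym2 (Fin n))}
    (hnd : ∀ e ∈ E', ¬ (Sym2.map ρ e).IsDiag) :
    ∑ c : Fin k, (∑ e ∈ E', if c ∈ colorPair ρ e then (1:ℝ) else 0)^2 ≤
      (E'.card:ℝ)^2 + E'.card
      + ((E'.offDiag.filter (fun p => (colorPair ρ p.1 ∩ colorPair ρ p.2).card = 2)).card : ℝ)
      - ((E'.offDiag.filter (fun p => colorPair ρ p.1 ∩ colorPair ρ p.2 = ∅)).card : ℝ) := by
  have step1 : ∑ c : Fin k, (∑ e ∈ E', if c ∈ colorPair ρ e then (1:ℝ) else 0)^2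
      = ∑ e ∈ E', ∑ e' ∈ E', ((colorPair ρ e ∩ colorPair ρ e').card : ℝ) := by
    rw [← sq_sum_swap]
    refine Finset.sum_congr rfl fun e _ => Finset.sum_congr rfl fun e' _ => ?_
    have h1 : ∀ c : Fin k, (if c ∈ colorPair ρ e then (1:ℝ) else 0) *
        (if c ∈ colorPair ρ e' then 1 else 0)
        = if c ∈ colorPair ρ e ∩ colorPair ρ e' then 1 else 0 := by
      intro c
      by_cases h1 : c ∈ colorPair ρ e <;> by_cases h2 : c ∈ colorPair ρ e' <;>
        simp [h1, h2, Finset.mem_inter]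
    rw [Finset.sum_congr rfl fun c _ => h1 c, Finset.sum_boole]
    congr 2
    ext c; simp
  rw [step1, ← Finset.sum_product', ← Finset.diag_union_offDiag,
    Finset.sum_union (Finset.disjoint_diag_offDiag E')]
  have hdiag : ∑ p ∈ E'.diag, ((colorPair ρ p.1 ∩ colorPair ρ p.2).card : ℝ)
      = 2 * E'.card := by
    rw [diag_sum]
    have h2 : ∀ e ∈ E', ((colorPair ρ e ∩ colorPair ρ e).card : ℝ) = 2 := by
      intro e he; rw [Finset.inter_self, colorPair_card (hnd e he)]; norm_num
    rw [Finset.sum_congr rfl h2, Finset.sum_const, nsmul_eq_mul, mul_comm]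
  have hoff : ∑ p ∈ E'.offDiag, ((colorPair ρ p.1 ∩ colorPair ρ p.2).card : ℝ) ≤
      ∑ p ∈ E'.offDiag, ((1:ℝ)
        + (if (colorPair ρ p.1 ∩ colorPair ρ p.2).card = 2 then (1:ℝ) else 0)
        - (if colorPair ρ p.1 ∩ colorPair ρ p.2 = ∅ then (1:ℝ) else 0)) := by
    apply Finset.sum_le_sum
    rintro ⟨e, e'⟩ hp
    obtain ⟨he, he', -⟩ := Finset.mem_offDiag.mp hp
    have hc2 : (colorPair ρ e ∩ colorPair ρ e').card ≤ 2 :=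
      le_trans (Finset.card_le_card Finset.inter_subset_left)
        (le_of_eq (colorPair_card (hnd e he)))
    by_cases h2 : (colorPair ρ e ∩ colorPair ρ e').card = 2
    · have hne0 : ¬ (colorPair ρ e ∩ colorPair ρ e' = ∅) := fun h => by
        rw [h] at h2; simp at h2
      rw [if_pos h2, if_neg hne0, h2]
      norm_num
    · by_cases h0 : colorPair ρ e ∩ colorPair ρ e' = ∅
      · rw [if_neg h2, if_pos h0, h0]
        simp
      · have h1 : (colorPair ρ e ∩ colorPair ρ e').card ≤ 1 := by omega
        simp only [h2, h0, if_false]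
        have : ((colorPair ρ e ∩ colorPair ρ e').card : ℝ) ≤ 1 := by exact_mod_cast h1
        linarith
  have hoffval : ∑ p ∈ E'.offDiag, ((1:ℝ)
        + (if (colorPair ρ p.1 ∩ colorPair ρ p.2).card = 2 then (1:ℝ) else 0)
        - (if colorPair ρ p.1 ∩ colorPair ρ p.2 = ∅ then (1:ℝ) else 0))
      = (E'.offDiag.card : ℝ)
      + ((E'.offDiag.filter (fun p => (colorPair ρ p.1 ∩ colorPair ρ p.2).card = 2)).card : ℝ)
      - ((E'.offDiag.filter (fun p => colorPair ρ p.1 ∩ colorPair ρ p.2 = ∅)).card : ℝ) := by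
    rw [Finset.sum_sub_distrib, Finset.sum_add_distrib, Finset.sum_const, Finset.sum_boole,
      Finset.sum_boole, nsmul_eq_mul, mul_one]
  have hodc : (E'.offDiag.card : ℝ) = (E'.card:ℝ)^2 - E'.card := by
    rw [Finset.offDiag_card, Nat.cast_sub (by nlinarith [Nat.zero_le E'.card] : E'.card ≤ E'.card * E'.card)]
    push_cast; ring
  rw [hdiag]
  have := le_trans hoff (le_of_eq hoffval)
  rw [hodc] at this
  linarith

lemma frac_mul_card {E' : Finset (Sym2 (Fin n))} (hE : E'.Nonempty)
    {S : Finset (Sym2 (Fin n) × Sym2 (Fin n))} (hS : S ⊆ E'.offDiag) :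
    ((S.card:ℝ) / ((E'.card:ℝ) * ((E'.card:ℝ) - 1))) * ((E'.card:ℝ) - 1)
      = (S.card:ℝ) / (E'.card:ℝ) := by
  rcases eq_or_lt_of_le (Nat.one_le_iff_ne_zero.mpr (Finset.card_ne_zero_of_mem hE.choose_spec))
    with h1 | h2
  · have hod : E'.offDiag.card = 0 := by rw [Finset.offDiag_card, ← h1]
    have hS0 : S.card = 0 := Nat.eq_zero_of_le_zero (hod ▸ Finset.card_le_card hS)
    rw [hS0, ← h1]
    norm_num
  · have hN : (2:ℝ) ≤ (E'.card:ℝ) := by exact_mod_cast h2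
    have h0 : (E'.card:ℝ) ≠ 0 := by linarith
    have h1' : (E'.card:ℝ) - 1 ≠ 0 := by intro h; nlinarith
    field_simp

end Stmt9Helpers

open Classical in
/-- clusters with large color-disagreement fraction `γ_i > τ/3` contain at most
`22·kd` edges in total, provided the clustering is cheap and the degree/κ bounds hold. -/
theorem stmt9 (n k d : ℕ) (hk : 1 ≤ k) (hd : 1 ≤ d)
    (τ α : ℝ) (hτ : 0 < τ) (hα : 0 < α)
    (ρ : Fin n → Fin k)
    (E : Fin k → Finset (Sym2 (Fin n)))
    (hne : ∀ i, (E i).Nonempty)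
    (hdisj : ∀ i j, i ≠ j → Disjoint (E i) (E j))
    (hnm : ∀ i, ∀ e ∈ E i, ¬ (Sym2.map ρ e).IsDiag)
    (hcost : ∑ i : Fin k, oneMeansCost ((E i).image (embedEdge n k ρ)) ≤
      3 * ((∑ i : Fin k, (E i).card : ℕ) : ℝ) - (1 - τ) * (k * d))
    (hdegsq : ∀ i : Fin k,
      (∑ v : Fin n, (((E i).filter (fun e => v ∈ e)).card : ℝ) ^ 2) / ((E i).card : ℝ) ≤
        (d : ℝ) * (1 + 5 * Real.sqrt α))
    (hκ : ∀ i : Fin k,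
      kappaFrac ρ (E i) * (((E i).card : ℝ) - 1) ≤ 36 * Real.log k)
    (hparam : 5 * Real.sqrt α * ((k : ℝ) * d) + (k : ℝ) + 36 * (k : ℝ) * Real.log k ≤
      6 * τ * ((k : ℝ) * d)) :
    ∑ i ∈ Finset.univ.filter (fun i : Fin k => τ / 3 < gammaFrac ρ (E i)), ((E i).card : ℝ) ≤
      22 * ((k : ℝ) * d) := by
  set dd : ℝ := (d : ℝ) * (1 + 5 * Real.sqrt α) with hdd
  set N : Fin k → ℝ := fun i => ((E i).card : ℝ) with hN
  set Gf : Fin k → ℝ := fun i =>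
    (((E i).offDiag.filter (fun p => colorPair ρ p.1 ∩ colorPair ρ p.2 = ∅)).card : ℝ) / N i
    with hGf
  set Kf : Fin k → ℝ := fun i =>
    (((E i).offDiag.filter (fun p => (colorPair ρ p.1 ∩ colorPair ρ p.2).card = 2)).card : ℝ) / N i
    with hKf
  have hNpos : ∀ i, (0:ℝ) < N i := fun i => by
    have := (hne i).card_pos; simp only [hN]; exact_mod_cast this
  have hN1 : ∀ i, (1:ℝ) ≤ N i := fun i => by
    have := Nat.one_le_iff_ne_zero.mpr (Finset.card_ne_zero_of_mem (hne i).choose_spec)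
    simp only [hN]; exact_mod_cast this
  -- γ_i (N_i - 1) = Gf i,  κ_i (N_i - 1) = Kf i
  have hgam : ∀ i, gammaFrac ρ (E i) * (N i - 1) = Gf i := fun i =>
    frac_mul_card (hne i) (Finset.filter_subset _ _)
  have hkap : ∀ i, kappaFrac ρ (E i) * (N i - 1) = Kf i := fun i =>
    frac_mul_card (hne i) (Finset.filter_subset _ _)
  have hGnn : ∀ i, 0 ≤ Gf i := fun i =>
    div_nonneg (Nat.cast_nonneg _) (le_of_lt (hNpos i))
  -- per-cluster cost lower bound
  have hchain : ∀ i, 3 * N i - 1 - dd + Gf i - Kf i ≤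
      oneMeansCost ((E i).image (embedEdge n k ρ)) := by
    intro i
    refine le_trans ?_ (cost_ge (hne i) (hnm i))
    have hdsum : ∑ x : Fin n, (∑ e ∈ E i, if x ∈ e then (1:ℝ) else 0)^2
        = ∑ v : Fin n, (((E i).filter (fun e => v ∈ e)).card : ℝ)^2 :=
      Finset.sum_congr rfl fun x _ => by rw [Finset.sum_boole]
    have hD : ∑ x : Fin n, (∑ e ∈ E i, if x ∈ e then (1:ℝ) else 0)^2 ≤ dd * N i := by
      rw [hdsum]
      have := hdegsq i
      rw [div_le_iff₀ (hNpos i)] at this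
      linarith [this]
    have hCS := colorsq_le (hnm i)
    set Dq := ∑ x : Fin n, (∑ e ∈ E i, if x ∈ e then (1:ℝ) else 0)^2
    set Cq := ∑ c : Fin k, (∑ e ∈ E i, if c ∈ colorPair ρ e then (1:ℝ) else 0)^2
    have hnum : Dq + Cq ≤ dd * N i + ((N i)^2 + N i + Kf i * N i - Gf i * N i) := by
      have hKG : (((E i).offDiag.filter
            (fun p => (colorPair ρ p.1 ∩ colorPair ρ p.2).card = 2)).card : ℝ) = Kf i * N i := by
        exact (div_mul_cancel₀ _ (ne_of_gt (hNpos i))).symm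
      have hGG : (((E i).offDiag.filter
            (fun p => colorPair ρ p.1 ∩ colorPair ρ p.2 = ∅)).card : ℝ) = Gf i * N i := by
        exact (div_mul_cancel₀ _ (ne_of_gt (hNpos i))).symm
      rw [← hKG, ← hGG]
      linarith [hCS]
    have hdiv : (Dq + Cq) / N i ≤ dd + N i + 1 + Kf i - Gf i := by
      rw [div_le_iff₀ (hNpos i)]
      have : (dd + N i + 1 + Kf i - Gf i) * N i
          = dd * N i + ((N i)^2 + N i + Kf i * N i - Gf i * N i) := by ring
      rw [this]; exact hnum
    have h4 : 4 * N i - (dd + N i + 1 + Kf i - Gf i) ≤ 4 * N i - (Dq + Cq) / N i := by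
      linarith
    linarith
  -- sum the per-cluster bounds
  have hsum : ∑ i : Fin k, (3 * N i - 1 - dd + Gf i - Kf i) ≤
      ∑ i : Fin k, oneMeansCost ((E i).image (embedEdge n k ρ)) :=
    Finset.sum_le_sum fun i _ => hchain i
  have hexp : ∑ i : Fin k, (3 * N i - 1 - dd + Gf i - Kf i)
      = 3 * (∑ i : Fin k, N i) - k - k * dd + (∑ i : Fin k, Gf i) - ∑ i : Fin k, Kf i := by
    rw [Finset.sum_sub_distrib, Finset.sum_add_distrib, Finset.sum_sub_distrib,
      Finset.sum_sub_distrib, ← Finset.mul_sum, Finset.sum_const, Finset.sum_const,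
      Finset.card_univ, Fintype.card_fin, nsmul_eq_mul, nsmul_eq_mul, mul_one]
  have hcast : ((∑ i : Fin k, (E i).card : ℕ) : ℝ) = ∑ i : Fin k, N i := by
    push_cast; rfl
  have hKsum : ∑ i : Fin k, Kf i ≤ 36 * (k:ℝ) * Real.log k := by
    calc ∑ i : Fin k, Kf i ≤ ∑ _i : Fin k, 36 * Real.log k :=
          Finset.sum_le_sum fun i _ => by rw [← hkap i]; exact hκ i
      _ = 36 * (k:ℝ) * Real.log k := by
          rw [Finset.sum_const, Finset.card_univ, Fintype.card_fin, nsmul_eq_mul]; ring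
  have hGsum : ∑ i : Fin k, Gf i ≤ 7 * τ * ((k:ℝ) * d) := by
    rw [hexp] at hsum
    rw [hcast] at hcost
    have expand_dd : (k:ℝ) * dd = (k:ℝ) * d + 5 * Real.sqrt α * ((k:ℝ) * d) := by
      rw [hdd]; ring
    nlinarith [hsum, hcost, hKsum, hparam]
  -- final count
  have hperi : ∀ i ∈ Finset.univ.filter (fun i : Fin k => τ / 3 < gammaFrac ρ (E i)),
      N i ≤ (3/τ) * Gf i + 1 := by
    intro i hi
    have hγ : τ / 3 < gammaFrac ρ (E i) := (Finset.mem_filter.mp hi).2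
    have h1 : (1:ℝ) ≤ (3/τ) * gammaFrac ρ (E i) := by
      rw [div_mul_eq_mul_div, le_div_iff₀ hτ]
      linarith [hγ]
    have h2 : N i - 1 ≤ (3/τ) * gammaFrac ρ (E i) * (N i - 1) := by
      nlinarith [hN1 i, h1]
    rw [mul_assoc, hgam i] at h2
    linarith
  calc ∑ i ∈ Finset.univ.filter (fun i : Fin k => τ / 3 < gammaFrac ρ (E i)), N i
      ≤ ∑ i ∈ Finset.univ.filter (fun i : Fin k => τ / 3 < gammaFrac ρ (E i)),
        ((3/τ) * Gf i + 1) := Finset.sum_le_sum hperi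
    _ ≤ (∑ i : Fin k, (3/τ) * Gf i) + k := by
        rw [Finset.sum_add_distrib, Finset.sum_const, nsmul_eq_mul, mul_one]
        have hsub : ∑ i ∈ Finset.univ.filter (fun i : Fin k => τ / 3 < gammaFrac ρ (E i)),
            (3/τ) * Gf i ≤ ∑ i : Fin k, (3/τ) * Gf i :=
          Finset.sum_le_sum_of_subset_of_nonneg (Finset.filter_subset _ _)
            (fun i _ _ => mul_nonneg (by positivity) (hGnn i))
        have hcard : ((Finset.univ.filter
            (fun i : Fin k => τ / 3 < gammaFrac ρ (E i))).card : ℝ) ≤ k := by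
          have := Finset.card_filter_le Finset.univ (fun i : Fin k => τ / 3 < gammaFrac ρ (E i))
          rw [Finset.card_univ, Fintype.card_fin] at this
          exact_mod_cast this
        linarith
    _ ≤ (3/τ) * (7 * τ * ((k:ℝ) * d)) + k := by
        rw [← Finset.mul_sum]
        have h3τ : (0:ℝ) ≤ 3/τ := by positivity
        have := mul_le_mul_of_nonneg_left hGsum h3τ
        linarith
    _ ≤ 22 * ((k:ℝ) * d) := by
        have h1 : (3/τ) * (7 * τ * ((k:ℝ) * d)) = 21 * ((k:ℝ) * d) := by
          field_simp; ring
        have hkd : (k:ℝ) ≤ (k:ℝ) * d := by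
          have : (1:ℝ) ≤ (d:ℝ) := by exact_mod_cast hd
          nlinarith [Nat.cast_nonneg k (α := ℝ)]
        linarith
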